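/- arXiv:1010.4522 — 3 statements merged into one kernel-verified Lean document; each statement's English description precedes it below -/
import Mathlib

section
/- In the setting of the Helly counterexample: let E be the L⁰([0,1],ℂ)-submodule of L⁰ consisting of all finite sums Σᵢ ξᵢ Ĩ_{[2^{-(nᵢ+1)}, 2^{-nᵢ}]} with ξᵢ ∈ L⁰ and nᵢ ∈ ℕ. Then E does not have the countable concatenation property; in particular the constant function 1 does not belong to E although Ĩ_{Aₙ}·1 ∈ Ĩ_{Aₙ}E for the countable partition Aₙ = [2^{-(n+1)}, 2^{-n}] (together with the null set {0,1}-adjustment) of [0,1]. -/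
open MeasureTheory

noncomputable instance AEEqFun.instCommRing' {α γ : Type*} [MeasurableSpace α] {μ : Measure α}
    [TopologicalSpace γ] [CommRing γ] [IsTopologicalRing γ] : CommRing (α →ₘ[μ] γ) :=
  { (inferInstance : AddCommGroup (α →ₘ[μ] γ)),
    (inferInstance : CommMonoid (α →ₘ[μ] γ)) with
    left_distrib := fun f g h => by
      apply AEEqFun.ext
      filter_upwards [AEEqFun.coeFn_mul f (g + h), AEEqFun.coeFn_add g h,
        AEEqFun.coeFn_mul f g, AEEqFun.coeFn_mul f h,
        AEEqFun.coeFn_add (f * g) (f * h)] with a h1 h2 h3 h4 h5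
      simp only [Pi.mul_apply, Pi.add_apply] at *
      rw [h1, h2, h5, h3, h4, mul_add]
    right_distrib := fun f g h => by
      apply AEEqFun.ext
      filter_upwards [AEEqFun.coeFn_mul (f + g) h, AEEqFun.coeFn_add f g,
        AEEqFun.coeFn_mul f h, AEEqFun.coeFn_mul g h,
        AEEqFun.coeFn_add (f * h) (g * h)] with a h1 h2 h3 h4 h5
      simp only [Pi.mul_apply, Pi.add_apply] at *
      rw [h1, h2, h5, h3, h4, add_mul]
    zero_mul := fun f => by
      apply AEEqFun.ext
      filter_upwards [AEEqFun.coeFn_mul 0 f, AEEqFun.coeFn_zero (α := α) (μ := μ) (β := γ)]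
        with a h1 h2
      simp only [Pi.mul_apply] at *
      rw [h1, h2]
      simp
    mul_zero := fun f => by
      apply AEEqFun.ext
      filter_upwards [AEEqFun.coeFn_mul f 0, AEEqFun.coeFn_zero (α := α) (μ := μ) (β := γ)]
        with a h1 h2
      simp only [Pi.mul_apply] at *
      rw [h1, h2]
      simp }

namespace RNM

variable {Ω : Type} [MeasurableSpace Ω] {P : Measure Ω}

/-- the pointwise absolute value `L⁰(𝓕,ℂ) → L⁰(𝓕,ℝ)`. -/
noncomputable def L0abs (ξ : Ω →ₘ[P] ℂ) : Ω →ₘ[P] ℝ :=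
  ξ.comp (fun z => ‖z‖) continuous_norm

/-- the canonical embedding `L⁰(𝓕,ℝ) → L⁰(𝓕,ℂ)`. -/
noncomputable def ofRealC (ξ : Ω →ₘ[P] ℝ) : Ω →ₘ[P] ℂ :=
  ξ.comp Complex.ofReal Complex.continuous_ofReal

/-- pointwise complex conjugation on `L⁰(𝓕,ℂ)`. -/
noncomputable def conjC (ξ : Ω →ₘ[P] ℂ) : Ω →ₘ[P] ℂ :=
  ξ.comp (fun z => starRingEnd ℂ z) Complex.continuous_conj

/-- `ξ ∈ L⁰₊₊`, i.e. `ξ > 0` a.e. on `Ω`. -/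
def L0pos (ξ : Ω →ₘ[P] ℝ) : Prop := ∀ᵐ ω ∂P, 0 < ξ ω

/-- `ξ < η` (a.e.) on the whole of `Ω`. -/
def ltAE (ξ η : Ω →ₘ[P] ℝ) : Prop := ∀ᵐ ω ∂P, ξ ω < η ω

/-- the equivalence class `Ĩ_A ∈ L⁰(𝓕,ℂ)` of the indicator of a measurable set `A`. -/
noncomputable def indC (A : Set Ω) (hA : MeasurableSet A) : Ω →ₘ[P] ℂ :=
  AEEqFun.mk (A.indicator fun _ => (1 : ℂ)) (aestronglyMeasurable_const.indicator hA)

/-- the equivalence class `Ĩ_A ∈ L⁰(𝓕,ℝ)` of the indicator of a measurable set `A`. -/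
noncomputable def indR (A : Set Ω) (hA : MeasurableSet A) : Ω →ₘ[P] ℝ :=
  AEEqFun.mk (A.indicator fun _ => (1 : ℝ)) (aestronglyMeasurable_const.indicator hA)

section AELemmas

lemma L0abs_ae (ξ : Ω →ₘ[P] ℂ) : ∀ᵐ ω ∂P, (L0abs ξ) ω = ‖ξ ω‖ :=
  AEEqFun.coeFn_comp _ _ ξ

lemma le_ae {ξ η : Ω →ₘ[P] ℝ} (h : ξ ≤ η) : ∀ᵐ ω ∂P, ξ ω ≤ η ω :=
  AEEqFun.coeFn_le.2 h

lemma le_of_ae {ξ η : Ω →ₘ[P] ℝ} (h : ∀ᵐ ω ∂P, ξ ω ≤ η ω) : ξ ≤ η :=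
  AEEqFun.coeFn_le.1 h

lemma mul_ae {γ : Type*} [TopologicalSpace γ] [CommRing γ] [IsTopologicalRing γ]
    (ξ η : Ω →ₘ[P] γ) : ∀ᵐ ω ∂P, (ξ * η) ω = ξ ω * η ω :=
  AEEqFun.coeFn_mul ξ η

lemma add_ae {γ : Type*} [TopologicalSpace γ] [AddGroup γ] [IsTopologicalAddGroup γ]
    (ξ η : Ω →ₘ[P] γ) : ∀ᵐ ω ∂P, (ξ + η) ω = ξ ω + η ω :=
  AEEqFun.coeFn_add ξ η

lemma sub_ae {γ : Type*} [TopologicalSpace γ] [AddGroup γ] [IsTopologicalAddGroup γ]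
    (ξ η : Ω →ₘ[P] γ) : ∀ᵐ ω ∂P, (ξ - η) ω = ξ ω - η ω :=
  AEEqFun.coeFn_sub ξ η

lemma zero_ae (γ : Type*) [TopologicalSpace γ] [Zero γ] :
    ∀ᵐ ω ∂P, (0 : Ω →ₘ[P] γ) ω = 0 :=
  AEEqFun.coeFn_zero

lemma one_ae (γ : Type*) [TopologicalSpace γ] [One γ] :
    ∀ᵐ ω ∂P, (1 : Ω →ₘ[P] γ) ω = 1 :=
  AEEqFun.coeFn_one

end AELemmas

/-- a countable measurable partition of `Ω`. -/
structure IsMPartition (A : ℕ → Set Ω) : Prop where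
  meas : ∀ n, MeasurableSet (A n)
  disj : Pairwise (Function.onFun Disjoint A)
  cover : (⋃ n, A n) = Set.univ

section Module

variable {E : Type*} [AddCommGroup E] [Module (Ω →ₘ[P] ℂ) E]

variable (P E) in
/-- `E` has the countable concatenation property. -/
def HasCCP : Prop :=
  ∀ (A : ℕ → Set Ω) (hA : IsMPartition A) (x : ℕ → E),
    ∃ x0 : E, ∀ n, indC (P := P) (A n) (hA.meas n) • x0 = indC (P := P) (A n) (hA.meas n) • x n

/-- a subset `S` of `E` has the countable concatenation property. -/
def SetCCP (S : Set E) : Prop :=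
  ∀ (A : ℕ → Set Ω) (hA : IsMPartition A) (x : ℕ → E), (∀ n, x n ∈ S) →
    ∃ x0 ∈ S, ∀ n, indC (P := P) (A n) (hA.meas n) • x0 = indC (P := P) (A n) (hA.meas n) • x n

/-- the countable concatenation hull `H_cc(S)` of a subset `S` of `E`. -/
def Hcc (S : Set E) : Set E :=
  {x | ∃ (A : ℕ → Set Ω) (hA : IsMPartition A) (m : ℕ → E), (∀ n, m n ∈ S) ∧
    ∀ n, indC (P := P) (A n) (hA.meas n) • x = indC (P := P) (A n) (hA.meas n) • m n}

/-- `L⁰`-convexity of a subset of an `L⁰(𝓕,ℂ)`-module. -/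
def L0Convex (S : Set E) : Prop :=
  ∀ x ∈ S, ∀ y ∈ S, ∀ ξ : Ω →ₘ[P] ℝ, 0 ≤ ξ → ξ ≤ 1 →
    ofRealC ξ • x + ofRealC (1 - ξ) • y ∈ S

/-- the random-norm axioms for `nrm : E → L⁰₊`, making `(E, nrm)` an `RN` module over `ℂ`. -/
structure IsRNNorm (nrm : E → (Ω →ₘ[P] ℝ)) : Prop where
  nonneg : ∀ x, 0 ≤ nrm x
  eq_zero_iff : ∀ x, nrm x = 0 ↔ x = 0
  smul_eq : ∀ (ξ : Ω →ₘ[P] ℂ) (x : E), nrm (ξ • x) = L0abs ξ * nrm x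
  add_le : ∀ x y, nrm (x + y) ≤ nrm x + nrm y

/-- the submodule of `P`-a.e. bounded random linear functionals on `(E, nrm)`:
the random conjugate space `E*`. -/
noncomputable def rdual (nrm : E → (Ω →ₘ[P] ℝ)) :
    Submodule (Ω →ₘ[P] ℂ) (E →ₗ[Ω →ₘ[P] ℂ] (Ω →ₘ[P] ℂ)) where
  carrier := {f | ∃ ξ : Ω →ₘ[P] ℝ, 0 ≤ ξ ∧ ∀ x, L0abs (f x) ≤ ξ * nrm x}
  zero_mem' := by
    refine ⟨0, le_refl 0, fun x => ?_⟩
    apply le_of_ae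
    have e0 : ((0 : E →ₗ[Ω →ₘ[P] ℂ] (Ω →ₘ[P] ℂ)) x) = (0 : Ω →ₘ[P] ℂ) := rfl
    filter_upwards [L0abs_ae ((0 : E →ₗ[Ω →ₘ[P] ℂ] (Ω →ₘ[P] ℂ)) x),
      mul_ae (0 : Ω →ₘ[P] ℝ) (nrm x), zero_ae ℝ, zero_ae ℂ] with ω h1 h2 h3 h4
    rw [h1, h2, h3, e0, h4]
    simp
  add_mem' := by
    rintro f g ⟨ξ, hξ0, hξ⟩ ⟨η, hη0, hη⟩
    have hsum : (0 : Ω →ₘ[P] ℝ) ≤ ξ + η := by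
      apply le_of_ae
      filter_upwards [le_ae hξ0, le_ae hη0, add_ae ξ η, zero_ae ℝ] with ω h1 h2 h3 h4
      rw [h3, h4]
      rw [h4] at h1 h2
      linarith
    refine ⟨ξ + η, hsum, fun x => ?_⟩
    apply le_of_ae
    have e1 : ((f + g) x) = f x + g x := rfl
    filter_upwards [L0abs_ae ((f + g) x), add_ae (f x) (g x),
      mul_ae (ξ + η) (nrm x), add_ae ξ η, mul_ae ξ (nrm x), mul_ae η (nrm x),
      le_ae (hξ x), le_ae (hη x), L0abs_ae (f x), L0abs_ae (g x)]
      with ω h1 h2 h3 h4 h5 h6 h7 h8 h9 h10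
    rw [h1, h3, h4, e1, h2]
    rw [h9, h5] at h7
    rw [h10, h6] at h8
    calc ‖f x ω + g x ω‖ ≤ ‖f x ω‖ + ‖g x ω‖ :=
          norm_add_le _ _
      _ ≤ ξ ω * nrm x ω + η ω * nrm x ω := add_le_add h7 h8
      _ = (ξ ω + η ω) * nrm x ω := by ring
  smul_mem' := by
    rintro c f ⟨ξ, hξ0, hξ⟩
    have hpos : (0 : Ω →ₘ[P] ℝ) ≤ L0abs c * ξ := by
      apply le_of_ae
      filter_upwards [mul_ae (L0abs c) ξ, L0abs_ae c, le_ae hξ0, zero_ae ℝ]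
        with ω h1 h2 h3 h4
      rw [h1, h2, h4]
      rw [h4] at h3
      positivity
    refine ⟨L0abs c * ξ, hpos, fun x => ?_⟩
    apply le_of_ae
    have e1 : ((c • f) x) = c * f x := rfl
    filter_upwards [L0abs_ae ((c • f) x), mul_ae c (f x),
      mul_ae (L0abs c * ξ) (nrm x), mul_ae (L0abs c) ξ, L0abs_ae c,
      le_ae (hξ x), L0abs_ae (f x), mul_ae ξ (nrm x)] with ω h1 h2 h3 h4 h5 h6 h7 h8
    rw [h1, h3, h4, h5, e1, h2]
    rw [h7, h8] at h6
    have h0 : (0:ℝ) ≤ ‖c ω‖ := norm_nonneg _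
    calc ‖c ω * f x ω‖ = ‖c ω‖ * ‖f x ω‖ := norm_mul _ _
      _ ≤ ‖c ω‖ * (ξ ω * nrm x ω) := mul_le_mul_of_nonneg_left h6 h0
      _ = ‖c ω‖ * ξ ω * nrm x ω := by ring

/-- the conjugate random norm `‖f‖* = ⋁{|f(y)| : ‖y‖ ≤ 1}` (the lattice supremum, when
it exists). -/
noncomputable def dnorm (nrm : E → (Ω →ₘ[P] ℝ))
    (f : E →ₗ[Ω →ₘ[P] ℂ] (Ω →ₘ[P] ℂ)) : Ω →ₘ[P] ℝ := by
  classical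
  exact if h : ∃ s : Ω →ₘ[P] ℝ, IsLUB {a | ∃ y : E, nrm y ≤ 1 ∧ a = L0abs (f y)} s
    then h.choose else 0

/-- the random natural embedding of `E` into functionals on its random conjugate space. -/
noncomputable def Jmap (nrm : E → (Ω →ₘ[P] ℝ)) (x : E) :
    (↥(rdual nrm)) →ₗ[Ω →ₘ[P] ℂ] (Ω →ₘ[P] ℂ) where
  toFun f := f.1 x
  map_add' f g := rfl
  map_smul' c f := rfl

end Module

section Topologies

/-- a topology built from a directed family of "balls". -/
def ballTop {X ι : Type*} [Nonempty ι] (ball : X → ι → Set X)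
    (dir : ∀ x i j, ∃ k, ball x k ⊆ ball x i ∩ ball x j) : TopologicalSpace X where
  IsOpen B := ∀ x ∈ B, ∃ i, ball x i ⊆ B
  isOpen_univ := fun x _ => ⟨Classical.arbitrary ι, fun _ _ => trivial⟩
  isOpen_inter := fun B C hB hC x hx => by
    obtain ⟨i, hi⟩ := hB x hx.1
    obtain ⟨j, hj⟩ := hC x hx.2
    obtain ⟨k, hk⟩ := dir x i j
    exact ⟨k, fun y hy => ⟨hi (hk hy).1, hj (hk hy).2⟩⟩
  isOpen_sUnion := fun S hS x hx => by
    obtain ⟨B, hB, hxB⟩ := hx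
    obtain ⟨i, hi⟩ := hS B hB x hxB
    exact ⟨i, fun y hy => ⟨B, hB, hi hy⟩⟩

instance L0posNonempty : Nonempty {ε : Ω →ₘ[P] ℝ // L0pos ε} := by
  refine ⟨⟨1, ?_⟩⟩
  filter_upwards [one_ae (P := P) ℝ] with ω h
  rw [h]; exact one_pos

instance : Nonempty {e : ℝ // 0 < e} := ⟨⟨1, one_pos⟩⟩

instance : Nonempty {l : ℝ // 0 < l ∧ l < 1} := ⟨⟨1/2, by norm_num⟩⟩

lemma L0pos_inf {ε δ : Ω →ₘ[P] ℝ} (hε : L0pos ε) (hδ : L0pos δ) : L0pos (ε ⊓ δ) := by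
  filter_upwards [hε, hδ, AEEqFun.coeFn_inf ε δ] with ω h1 h2 h3
  rw [h3]; exact lt_inf_iff.2 ⟨h1, h2⟩

lemma ltAE_inf {a ε δ : Ω →ₘ[P] ℝ} (h : ltAE a (ε ⊓ δ)) : ltAE a ε ∧ ltAE a δ := by
  constructor
  · filter_upwards [h, AEEqFun.coeFn_inf ε δ] with ω h1 h2
    rw [h2] at h1; exact h1.trans_le inf_le_left
  · filter_upwards [h, AEEqFun.coeFn_inf ε δ] with ω h1 h2
    rw [h2] at h1; exact h1.trans_le inf_le_right

variable {E : Type*} [AddCommGroup E] [Module (Ω →ₘ[P] ℂ) E]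

/-- the locally `L⁰`-convex topology `𝓣_c` on an `RN` module `(E, nrm)`. -/
noncomputable def TcTop (nrm : E → (Ω →ₘ[P] ℝ)) : TopologicalSpace E :=
  ballTop (ι := {ε : Ω →ₘ[P] ℝ // L0pos ε})
    (fun x ε => {y | ltAE (nrm (y - x)) ε.1})
    (by
      rintro x ⟨ε, hε⟩ ⟨δ, hδ⟩
      exact ⟨⟨ε ⊓ δ, L0pos_inf hε hδ⟩, fun y hy => ⟨(ltAE_inf hy).1, (ltAE_inf hy).2⟩⟩)

/-- the `(ε,λ)`-topology `𝓣_{ε,λ}` on an `RN` module `(E, nrm)`. -/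
noncomputable def TelTop (nrm : E → (Ω →ₘ[P] ℝ)) : TopologicalSpace E :=
  ballTop (ι := {e : ℝ // 0 < e} × {l : ℝ // 0 < l ∧ l < 1})
    (fun x i => {y | ENNReal.ofReal (1 - i.2.1) < P {ω | nrm (y - x) ω < i.1.1}})
    (by
      rintro x ⟨⟨e₁, he₁⟩, ⟨l₁, hl₁⟩⟩ ⟨⟨e₂, he₂⟩, ⟨l₂, hl₂⟩⟩
      refine ⟨⟨⟨min e₁ e₂, lt_min he₁ he₂⟩,
        ⟨min l₁ l₂, lt_min hl₁.1 hl₂.1, lt_of_le_of_lt (min_le_left _ _) hl₁.2⟩⟩,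
        fun y hy => ⟨?_, ?_⟩⟩ <;> simp only [Set.mem_setOf_eq] at hy ⊢
      · refine lt_of_le_of_lt (ENNReal.ofReal_le_ofReal (by
          have := min_le_left l₁ l₂; linarith)) (hy.trans_le (measure_mono fun ω hω =>
          show nrm (y - x) ω < e₁ from lt_of_lt_of_le hω (min_le_left _ _)))
      · refine lt_of_le_of_lt (ENNReal.ofReal_le_ofReal (by
          have := min_le_right l₁ l₂; linarith)) (hy.trans_le (measure_mono fun ω hω =>
          show nrm (y - x) ω < e₂ from lt_of_lt_of_le hω (min_le_right _ _))))

variable (P) in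
/-- the locally `L⁰`-convex weak star topology `σ_c` on the space of random linear
functionals on a module `M`, induced by the pairing with `M`. -/
noncomputable def sigmaCTop (M : Type*) [AddCommGroup M] [Module (Ω →ₘ[P] ℂ) M] :
    TopologicalSpace (M →ₗ[Ω →ₘ[P] ℂ] (Ω →ₘ[P] ℂ)) :=
  ballTop (ι := Finset M × {ε : Ω →ₘ[P] ℝ // L0pos ε})
    (fun g i => {h | ∀ x ∈ i.1, ltAE (L0abs (h x - g x)) i.2.1})
    (by
      classical
      rintro g ⟨s, ε, hε⟩ ⟨t, δ, hδ⟩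
      refine ⟨⟨s ∪ t, ⟨ε ⊓ δ, L0pos_inf hε hδ⟩⟩, fun h hh => ⟨?_, ?_⟩⟩
      · exact fun x hx => (ltAE_inf (hh x (Finset.mem_union_left t hx))).1
      · exact fun x hx => (ltAE_inf (hh x (Finset.mem_union_right s hx))).2)

variable (P) in
/-- the `(ε,λ)` weak star topology `σ_{(ε,λ)}` on the space of random linear functionals
on a module `M`, induced by the pairing with `M`. -/
noncomputable def sigmaElTop (M : Type*) [AddCommGroup M] [Module (Ω →ₘ[P] ℂ) M] :
    TopologicalSpace (M →ₗ[Ω →ₘ[P] ℂ] (Ω →ₘ[P] ℂ)) :=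
  ballTop (ι := Finset M × {e : ℝ // 0 < e} × {l : ℝ // 0 < l ∧ l < 1})
    (fun g i => {h | ∀ x ∈ i.1,
      ENNReal.ofReal (1 - i.2.2.1) < P {ω | (L0abs (h x - g x)) ω < i.2.1.1}})
    (by
      classical
      rintro g ⟨s, ⟨e₁, he₁⟩, ⟨l₁, hl₁⟩⟩ ⟨t, ⟨e₂, he₂⟩, ⟨l₂, hl₂⟩⟩
      refine ⟨⟨s ∪ t, ⟨min e₁ e₂, lt_min he₁ he₂⟩,
        ⟨min l₁ l₂, lt_min hl₁.1 hl₂.1, lt_of_le_of_lt (min_le_left _ _) hl₁.2⟩⟩,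
        fun h hh => ⟨fun x hx => ?_, fun x hx => ?_⟩⟩
      · refine lt_of_le_of_lt (ENNReal.ofReal_le_ofReal (by
          have := min_le_left l₁ l₂; linarith))
          ((hh x (Finset.mem_union_left t hx)).trans_le (measure_mono fun ω hω =>
            show (L0abs (h x - g x)) ω < e₁ from lt_of_lt_of_le hω (min_le_left _ _)))
      · refine lt_of_le_of_lt (ENNReal.ofReal_le_ofReal (by
          have := min_le_right l₁ l₂; linarith))
          ((hh x (Finset.mem_union_right s hx)).trans_le (measure_mono fun ω hω =>
            show (L0abs (h x - g x)) ω < e₂ from lt_of_lt_of_le hω (min_le_right _ _))))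

end Topologies

end RNM


/-! Every element of `E` is a finite `L⁰`-combination of the indicators `Ĩ_{Iₙ}` of the dyadic
intervals `Iₙ = [2^{-(n+1)}, 2^{-n}]`, so it vanishes a.e. on some `(0, 2^{-N})`, a set of positive
measure; hence `1 ∉ E`. On the other hand the level sets of `ω ↦ ⌊-log₂ ω⌋₊` form a measurable
partition whose `n`-th piece lies in `Iₙ` up to a null set, so a concatenation in `E` of the
generators `Ĩ_{Iₙ}` along it would agree with `1` on every piece and hence equal `1`. -/

namespace RNM

section Indicator

variable {Ω : Type} [MeasurableSpace Ω] {P : Measure Ω}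

lemma indC_coeFn (A : Set Ω) (hA : MeasurableSet A) :
    indC (P := P) A hA =ᵐ[P] A.indicator 1 :=
  AEEqFun.coeFn_mk _ _

lemma indC_mul_indC {A B : Set Ω} (hA : MeasurableSet A) (hB : MeasurableSet B) :
    indC (P := P) A hA * indC B hB = indC (A ∩ B) (hA.inter hB) := by
  apply AEEqFun.ext
  filter_upwards [AEEqFun.coeFn_mul (indC (P := P) A hA) (indC B hB), indC_coeFn A hA,
    indC_coeFn B hB, indC_coeFn (P := P) (A ∩ B) (hA.inter hB)] with ω h hAω hBω hABω
  rw [h, Pi.mul_apply, hAω, hBω, hABω, Set.inter_indicator_one]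
  rfl

lemma indC_congr_ae {A B : Set Ω} (hA : MeasurableSet A) (hB : MeasurableSet B)
    (hAB : A =ᵐ[P] B) : indC (P := P) A hA = indC B hB :=
  AEEqFun.mk_eq_mk.2 (indicator_ae_eq_of_ae_eq_set hAB)

lemma indC_mul_of_ae_subset {A B : Set Ω} (hA : MeasurableSet A) (hB : MeasurableSet B)
    (hAB : A ≤ᵐ[P] B) : indC (P := P) A hA * indC B hB = indC A hA := by
  rw [indC_mul_indC]
  exact indC_congr_ae _ hA (Filter.inter_eventuallyEq_left.2 hAB)

lemma indC_eq_zero_iff {A : Set Ω} (hA : MeasurableSet A) :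
    indC (P := P) A hA = 0 ↔ P A = 0 := by
  rw [AEEqFun.ext_iff, (indC_coeFn A hA).congr_left, AEEqFun.coeFn_zero.congr_right,
    Set.indicator_ae_eq_zero, Function.support_one, Set.inter_univ]

lemma eq_of_forall_indC_mul_eq {A : ℕ → Set Ω} (hA : IsMPartition A) {x y : Ω →ₘ[P] ℂ}
    (h : ∀ n, indC (A n) (hA.meas n) * x = indC (A n) (hA.meas n) * y) : x = y := by
  have hae : ∀ᵐ ω ∂P, ∀ n, (A n).indicator 1 ω * x ω = (A n).indicator 1 ω * y ω := by
    refine ae_all_iff.2 fun n => ?_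
    filter_upwards [AEEqFun.ext_iff.1 (h n), AEEqFun.coeFn_mul (indC (A n) (hA.meas n)) x,
      AEEqFun.coeFn_mul (indC (A n) (hA.meas n)) y, indC_coeFn (P := P) (A n) (hA.meas n)]
      with ω hω hx hy hAω
    rwa [hx, hy, Pi.mul_apply, Pi.mul_apply, hAω] at hω
  apply AEEqFun.ext
  filter_upwards [hae] with ω hω
  obtain ⟨n, hn⟩ := Set.mem_iUnion.1 (hA.cover.symm ▸ Set.mem_univ ω)
  simpa [Set.indicator_of_mem hn] using hω n

lemma isMPartition_preimage_singleton {f : Ω → ℕ} (hf : Measurable f) :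
    IsMPartition fun n => f ⁻¹' {n} where
  meas n := hf (measurableSet_singleton n)
  disj _ _ hmn := (Set.disjoint_singleton.2 hmn).preimage f
  cover := by ext ω; simp

noncomputable def vanishingOn (T : Set Ω) (hT : MeasurableSet T) : Ideal (Ω →ₘ[P] ℂ) :=
  LinearMap.ker (LinearMap.mulLeft _ (indC T hT))

lemma mem_vanishingOn {T : Set Ω} {hT : MeasurableSet T} {x : Ω →ₘ[P] ℂ} :
    x ∈ vanishingOn T hT ↔ indC T hT * x = 0 :=
  Iff.rfl

lemma indC_mem_vanishingOn {A T : Set Ω} (hA : MeasurableSet A) (hT : MeasurableSet T)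
    (hAT : Disjoint A T) : indC A hA ∈ vanishingOn (P := P) T hT := by
  rw [mem_vanishingOn, indC_mul_indC, indC_eq_zero_iff, hAT.symm.inter_eq, measure_empty]

lemma vanishingOn_anti {T T' : Set Ω} (hT : MeasurableSet T) (hT' : MeasurableSet T')
    (h : T ⊆ T') : vanishingOn (P := P) T' hT' ≤ vanishingOn T hT := fun x hx => by
  rw [mem_vanishingOn] at hx ⊢
  rw [← indC_mul_of_ae_subset hT hT' (Filter.Eventually.of_forall h), mul_assoc, hx, mul_zero]

lemma measure_eq_zero_of_one_mem_vanishingOn {T : Set Ω} {hT : MeasurableSet T}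
    (h : 1 ∈ vanishingOn (P := P) T hT) : P T = 0 := by
  rwa [mem_vanishingOn, mul_one, indC_eq_zero_iff] at h

lemma eq_one_of_forall_indC_mul_eq {A B : ℕ → Set Ω} (hA : IsMPartition A)
    (hB : ∀ n, MeasurableSet (B n)) (hAB : ∀ n, A n ≤ᵐ[P] B n) {x : Ω →ₘ[P] ℂ}
    (hx : ∀ n, indC (A n) (hA.meas n) * x = indC (A n) (hA.meas n) * indC (B n) (hB n)) :
    x = 1 :=
  eq_of_forall_indC_mul_eq hA fun n => by rw [hx n, indC_mul_of_ae_subset _ _ (hAB n), mul_one]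

end Indicator

section Dyadic

open Set

def dyadicInterval (n : ℕ) : Set ℝ := Icc ((2 : ℝ) ^ (n + 1))⁻¹ ((2 : ℝ) ^ n)⁻¹

lemma rpow_neg_natCast_eq_inv_pow (x : ℝ) (n : ℕ) : x ^ (-(n : ℝ)) = (x ^ n)⁻¹ := by
  rw [Real.rpow_neg_natCast, zpow_neg, zpow_natCast]

lemma mem_dyadicInterval_floor_neg_logb {ω : ℝ} (hω : ω ∈ Ioc 0 1) :
    ω ∈ dyadicInterval ⌊-Real.logb 2 ω⌋₊ := by
  set n := ⌊-Real.logb 2 ω⌋₊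
  have hn : (n : ℝ) ≤ -Real.logb 2 ω :=
    Nat.floor_le (neg_nonneg.2 (Real.logb_nonpos one_lt_two hω.1.le hω.2))
  have hn' : -Real.logb 2 ω < n + 1 := Nat.lt_floor_add_one _
  constructor
  · rw [← rpow_neg_natCast_eq_inv_pow]
    exact ((Real.lt_logb_iff_rpow_lt one_lt_two hω.1).1 (by push_cast; linarith)).le
  · rw [← rpow_neg_natCast_eq_inv_pow, ← Real.logb_le_iff_le_rpow one_lt_two hω.1]
    linarith

lemma measurable_floor_neg_logb : Measurable fun ω : ℝ => ⌊-Real.logb 2 ω⌋₊ :=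
  (Real.measurable_log.div_const _).neg.nat_floor

lemma ae_mem_Ioc_zero_one : ∀ᵐ ω ∂volume.restrict (Icc (0 : ℝ) 1), ω ∈ Ioc 0 1 := by
  rw [← Measure.restrict_congr_set Ioc_ae_eq_Icc]
  exact ae_restrict_mem measurableSet_Ioc

lemma preimage_floor_neg_logb_ae_le (n : ℕ) :
    (fun ω : ℝ => ⌊-Real.logb 2 ω⌋₊) ⁻¹' {n} ≤ᵐ[volume.restrict (Icc (0 : ℝ) 1)]
      dyadicInterval n := by
  filter_upwards [ae_mem_Ioc_zero_one] with ω hω hn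
  exact (hn : ⌊-Real.logb 2 ω⌋₊ = n) ▸ mem_dyadicInterval_floor_neg_logb hω

lemma disjoint_dyadicInterval_Ioo (n : ℕ) :
    Disjoint (dyadicInterval n) (Ioo 0 ((2 : ℝ) ^ (n + 1))⁻¹) :=
  disjoint_left.2 fun _ h₁ h₂ => h₂.2.not_ge h₁.1

lemma antitone_Ioo_zero_inv_two_pow : Antitone fun N : ℕ => Ioo (0 : ℝ) ((2 : ℝ) ^ N)⁻¹ :=
  fun _ _ h => Ioo_subset_Ioo_right (inv_anti₀ (by positivity) (pow_le_pow_right₀ one_le_two h))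

lemma span_dyadicInterval_le_iSup_vanishingOn (P : Measure ℝ) :
    Submodule.span (ℝ →ₘ[P] ℂ) {g | ∃ n : ℕ, g = indC (dyadicInterval n) measurableSet_Icc} ≤
      ⨆ N : ℕ, vanishingOn (Ioo 0 ((2 : ℝ) ^ N)⁻¹) measurableSet_Ioo := by
  rw [Submodule.span_le]
  rintro _ ⟨n, rfl⟩
  exact Submodule.mem_iSup_of_mem (n + 1)
    (indC_mem_vanishingOn _ _ (disjoint_dyadicInterval_Ioo n))

lemma one_notMem_span_dyadicInterval :
    (1 : ℝ →ₘ[volume.restrict (Icc (0 : ℝ) 1)] ℂ) ∉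
      Submodule.span (ℝ →ₘ[volume.restrict (Icc (0 : ℝ) 1)] ℂ)
      {g | ∃ n : ℕ, g = indC (dyadicInterval n) measurableSet_Icc} := by
  intro h
  have hmono : Monotone fun N : ℕ => vanishingOn (P := volume.restrict (Icc (0 : ℝ) 1))
      (Ioo 0 ((2 : ℝ) ^ N)⁻¹) measurableSet_Ioo :=
    fun _ _ hNM => vanishingOn_anti _ _ (antitone_Ioo_zero_inv_two_pow hNM)
  obtain ⟨N, hN⟩ := (Submodule.mem_iSup_of_directed _ hmono.directed_le).1
    (span_dyadicInterval_le_iSup_vanishingOn _ h)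
  have hsub : Ioo (0 : ℝ) ((2 : ℝ) ^ N)⁻¹ ⊆ Icc 0 1 :=
    Ioo_subset_Icc_self.trans
      (Icc_subset_Icc_right (inv_le_one_of_one_le₀ (one_le_pow₀ one_le_two)))
  have hpos : 0 < volume.restrict (Icc (0 : ℝ) 1) (Ioo 0 ((2 : ℝ) ^ N)⁻¹) := by
    rw [Measure.restrict_eq_self _ hsub, Real.volume_Ioo]
    exact ENNReal.ofReal_pos.2 (sub_pos.2 (by positivity))
  exact hpos.ne' (measure_eq_zero_of_one_mem_vanishingOn hN)

end Dyadic

end RNM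

open MeasureTheory RNM in
/-- In the Helly counterexample the submodule `E` generated by the indicators of the
dyadic intervals `[2^{-(n+1)}, 2^{-n}]` does not have the countable concatenation
property; in particular `1 ∉ E` although `Ĩ_{Aₙ}·1 ∈ Ĩ_{Aₙ}E` for each stratum
`Aₙ = [2^{-(n+1)}, 2^{-n}]`. -/
theorem counterexample_no_ccp :
    ∀ P : Measure ℝ, P = MeasureTheory.volume.restrict (Set.Icc (0 : ℝ) 1) →
    ∀ E : Submodule (ℝ →ₘ[P] ℂ) (ℝ →ₘ[P] ℂ),
      E = Submodule.span (ℝ →ₘ[P] ℂ)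
        {g | ∃ n : ℕ, g = indC (P := P)
          (Set.Icc (((2 : ℝ) ^ (n + 1))⁻¹) (((2 : ℝ) ^ n)⁻¹)) measurableSet_Icc} →
      ¬ SetCCP (P := P) (E : Set (ℝ →ₘ[P] ℂ)) ∧
      (1 : ℝ →ₘ[P] ℂ) ∉ E ∧
      ∀ n : ℕ, ∃ e ∈ E,
        indC (P := P) (Set.Icc (((2 : ℝ) ^ (n + 1))⁻¹) (((2 : ℝ) ^ n)⁻¹))
            measurableSet_Icc * (1 : ℝ →ₘ[P] ℂ) =
          indC (P := P) (Set.Icc (((2 : ℝ) ^ (n + 1))⁻¹) (((2 : ℝ) ^ n)⁻¹))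
            measurableSet_Icc * e := by
  intro P hP E hE
  subst hP hE
  have hone := one_notMem_span_dyadicInterval
  refine ⟨fun hccp => hone ?_, hone, fun n => ⟨_, Submodule.subset_span ⟨n, rfl⟩, ?_⟩⟩
  · have hA := isMPartition_preimage_singleton measurable_floor_neg_logb
    obtain ⟨x, hxE, hx⟩ := hccp _ hA (fun n => indC (dyadicInterval n) measurableSet_Icc)
      fun n => Submodule.subset_span ⟨n, rfl⟩
    rwa [← eq_one_of_forall_indC_mul_eq hA (fun _ => measurableSet_Icc)
      preimage_floor_neg_logb_ae_le hx]
  · rw [mul_one]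
    exact (indC_mul_of_ae_subset _ _ (Filter.EventuallyLE.refl _ _)).symm
end

section
/- Let (E,‖·‖) be a random normed module over ℂ with base (Ω,𝓕,P) having the countable concatenation property. Then the closed unit ball E*(1) = {f ∈ E* : ‖f‖* ≤ 1} of the random conjugate space is closed in E* with respect to the (ε,λ) weak-star topology σ_{(ε,λ)}(E*,E), and hence also closed with respect to the (stronger) locally L⁰-convex weak-star topology σ_c(E*,E). -/
open MeasureTheory

/-! The supremum defining `‖f‖*` exists because `L⁰` is Dedekind complete: a bounded family,
closed under finite suprema, contains an increasing sequence along which `ξ ↦ ∫ arctan ξ`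
approaches its supremum over the family, and the a.e. limit `s` of that sequence is the
least upper bound, since `∫ arctan (s ⊔ η) ≤ ∫ arctan s` forces `s ⊔ η = s`. Hence
`‖f‖* ≤ 1` iff `|f y| ≤ 1` for every `y` in the unit ball. Each such condition is
`σ_{(ε,λ)}`-closed: if `|g y| ≥ 1 + r` on a set of measure `p > 0`, then every `h` with
`P(|h y - g y| < r/2) > 1 - min(p, 1/2)` has `|h y| > 1` on a set of positive measure.
Finally `σ_c` is finer than `σ_{(ε,λ)}`, as an a.e. bound by a constant holds with
probability one. -/

open MeasureTheory Filter Topology RNM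

section DedekindComplete

variable {α : Type*} [MeasurableSpace α] {μ : Measure α}

lemma norm_arctan_le_pi_div_two (x : ℝ) : ‖Real.arctan x‖ ≤ Real.pi / 2 := by
  rw [Real.norm_eq_abs, abs_le]
  exact ⟨(Real.neg_pi_div_two_lt_arctan x).le, (Real.arctan_lt_pi_div_two x).le⟩

/-- Since `arctan` is bounded and strictly increasing, this is a finite, strictly monotone
functional on all of `L⁰(μ, ℝ)`. -/
noncomputable def arctanIntegral (ξ : α →ₘ[μ] ℝ) : ℝ := ∫ a, Real.arctan (ξ a) ∂μ

lemma integrable_arctan_comp [IsFiniteMeasure μ] (ξ : α →ₘ[μ] ℝ) :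
    Integrable (fun a => Real.arctan (ξ a)) μ :=
  (integrable_const (Real.pi / 2)).mono'
    (Real.continuous_arctan.comp_aestronglyMeasurable ξ.aestronglyMeasurable)
    (ae_of_all _ fun _ => norm_arctan_le_pi_div_two _)

lemma strictMono_arctanIntegral [IsFiniteMeasure μ] :
    StrictMono (arctanIntegral (μ := μ)) := by
  intro ξ η hlt
  have hle : (fun a => Real.arctan (ξ a)) ≤ᵐ[μ] fun a => Real.arctan (η a) := by
    filter_upwards [AEEqFun.coeFn_le.2 hlt.le] with a ha
    exact Real.arctan_strictMono.monotone ha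
  refine (integral_mono_ae (integrable_arctan_comp ξ) (integrable_arctan_comp η) hle).lt_of_ne
    fun heq => hlt.ne (AEEqFun.ext ?_)
  filter_upwards [(integral_eq_iff_of_ae_le (integrable_arctan_comp ξ)
    (integrable_arctan_comp η) hle).1 heq] with a ha
  exact Real.arctan_injective ha

lemma tendsto_arctanIntegral [IsFiniteMeasure μ] {ξ : ℕ → α →ₘ[μ] ℝ} {η : α →ₘ[μ] ℝ}
    (h : ∀ᵐ a ∂μ, Tendsto (fun n => ξ n a) atTop (𝓝 (η a))) :
    Tendsto (fun n => arctanIntegral (ξ n)) atTop (𝓝 (arctanIntegral η)) :=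
  tendsto_integral_of_dominated_convergence (fun _ => Real.pi / 2)
    (fun n => (integrable_arctan_comp (ξ n)).aestronglyMeasurable) (integrable_const _)
    (fun _ => ae_of_all _ fun _ => norm_arctan_le_pi_div_two _)
    (h.mono fun _ ha => (Real.continuous_arctan.tendsto _).comp ha)

lemma exists_isLUB_ae_tendsto_of_monotone {y : ℕ → α →ₘ[μ] ℝ} (hy : Monotone y)
    {b : α →ₘ[μ] ℝ} (hb : ∀ n, y n ≤ b) :
    ∃ s, IsLUB (Set.range y) s ∧ ∀ᵐ a ∂μ, Tendsto (fun n => y n a) atTop (𝓝 (s a)) := by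
  have hmeas : AEStronglyMeasurable (fun a => ⨆ n, y n a) μ :=
    (AEMeasurable.iSup fun n => (y n).aestronglyMeasurable.aemeasurable).aestronglyMeasurable
  have hmono : ∀ᵐ a ∂μ, Monotone fun n => y n a := by
    filter_upwards [ae_all_iff.2 fun n => AEEqFun.coeFn_le.2 (hy (Nat.le_succ n))] with a ha
    exact monotone_nat_of_le_succ ha
  have hlim : ∀ᵐ a ∂μ, Tendsto (fun n => y n a) atTop (𝓝 (AEEqFun.mk _ hmeas a)) := by
    filter_upwards [hmono, ae_all_iff.2 fun n => AEEqFun.coeFn_le.2 (hb n),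
      AEEqFun.coeFn_mk _ hmeas] with a hmono_a hb_a hs_a
    rw [hs_a]
    exact tendsto_atTop_ciSup hmono_a ⟨b a, Set.forall_mem_range.2 hb_a⟩
  refine ⟨AEEqFun.mk _ hmeas, ⟨?_, fun u hu => ?_⟩, hlim⟩
  · rintro _ ⟨n, rfl⟩
    refine AEEqFun.coeFn_le.1 ?_
    filter_upwards [hmono, hlim] with a hmono_a hlim_a
    exact hmono_a.ge_of_tendsto hlim_a n
  · refine AEEqFun.coeFn_le.1 ?_
    filter_upwards [hlim, ae_all_iff.2 fun n => AEEqFun.coeFn_le.2 (hu ⟨n, rfl⟩)] with a hlim_a hu_a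
    exact le_of_tendsto' hlim_a hu_a

theorem AEEqFun.exists_isLUB [IsFiniteMeasure μ] {D : Set (α →ₘ[μ] ℝ)} (hne : D.Nonempty)
    (hbdd : BddAbove D) : ∃ s, IsLUB D s := by
  obtain ⟨b, hb⟩ := hbdd
  rw [← upperBounds_supClosure] at hb
  have hT : BddAbove (arctanIntegral '' supClosure D) :=
    ⟨arctanIntegral b, Set.forall_mem_image.2 fun _ hη =>
      strictMono_arctanIntegral.monotone (hb hη)⟩
  obtain ⟨t, -, ht, htD⟩ := exists_seq_tendsto_sSup ((hne.mono subset_supClosure).image _) hT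
  choose x hxD hxt using htD
  set y : ℕ → α →ₘ[μ] ℝ := fun n => (Finset.range (n + 1)).sup' Finset.nonempty_range_add_one x
  have hyD : ∀ n, y n ∈ supClosure D := fun n =>
    supClosed_supClosure.finsetSup'_mem _ fun i _ => hxD i
  have hy : Monotone y := fun m n hmn =>
    Finset.sup'_mono x (Finset.range_subset_range.2 (by omega)) _
  obtain ⟨s, hs, hlim⟩ := exists_isLUB_ae_tendsto_of_monotone hy fun n => hb (hyD n)
  have hsup_le : sSup (arctanIntegral '' supClosure D) ≤ arctanIntegral s :=
    le_of_tendsto' ht fun n => hxt n ▸ strictMono_arctanIntegral.monotone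
      ((Finset.le_sup' x (Finset.self_mem_range_succ n)).trans (hs.1 ⟨n, rfl⟩))
  have hub : s ∈ upperBounds (supClosure D) := by
    intro η hη
    have hlim' : Tendsto (fun n => arctanIntegral (y n ⊔ η)) atTop
        (𝓝 (arctanIntegral (s ⊔ η))) := by
      refine tendsto_arctanIntegral ?_
      filter_upwards [hlim, ae_all_iff.2 fun n => AEEqFun.coeFn_sup (y n) η,
        AEEqFun.coeFn_sup s η] with a hlim_a hyη hsη
      simp only [hyη, hsη]
      exact hlim_a.sup_nhds tendsto_const_nhds
    have : arctanIntegral (s ⊔ η) ≤ arctanIntegral s :=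
      (le_of_tendsto' hlim' fun n =>
        le_csSup hT ⟨_, supClosed_supClosure (hyD n) hη, rfl⟩).trans hsup_le
    by_contra hηs
    exact (strictMono_arctanIntegral (left_lt_sup.2 hηs)).not_ge this
  refine ⟨s, isLUB_supClosure.1 ⟨hub, fun u hu => hs.2 ?_⟩⟩
  rintro _ ⟨n, rfl⟩
  exact hu (hyD n)

end DedekindComplete

lemma exists_pos_measure_setOf_add_le_of_not_ae_le {α : Type*} [MeasurableSpace α]
    {μ : Measure α} {f g : α → ℝ} (h : ¬ ∀ᵐ a ∂μ, f a ≤ g a) :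
    ∃ r > 0, μ {a | g a + r ≤ f a} ≠ 0 := by
  contrapose! h
  refine ae_iff.2 (measure_mono_null (fun a ha => ?_) (measure_iUnion_null fun n : ℕ =>
    h (1 / ((n : ℝ) + 1)) Nat.one_div_pos_of_nat))
  obtain ⟨n, hn⟩ := exists_nat_one_div_lt (sub_pos.2 (not_le.1 ha))
  exact Set.mem_iUnion.2 ⟨n, show g a + _ ≤ f a by linarith⟩

namespace RNM

lemma ballTop_le_ballTop {X ι κ : Type*} [Nonempty ι] [Nonempty κ] {ball₁ : X → ι → Set X}
    {ball₂ : X → κ → Set X} (dir₁ : ∀ x i j, ∃ k, ball₁ x k ⊆ ball₁ x i ∩ ball₁ x j)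
    (dir₂ : ∀ x i j, ∃ k, ball₂ x k ⊆ ball₂ x i ∩ ball₂ x j)
    (h : ∀ x j, ∃ i, ball₁ x i ⊆ ball₂ x j) : ballTop ball₁ dir₁ ≤ ballTop ball₂ dir₂ :=
  fun _ hB x hx =>
    let ⟨j, hj⟩ := hB x hx
    let ⟨i, hi⟩ := h x j
    ⟨i, hi.trans hj⟩

variable {Ω : Type} [MeasurableSpace Ω] {P : Measure Ω}

section RandomDual

variable {E : Type*} [AddCommGroup E] [Module (Ω →ₘ[P] ℂ) E]

lemma isLUB_dnorm [IsFiniteMeasure P] {nrm : E → Ω →ₘ[P] ℝ} (hnrm : IsRNNorm nrm)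
    {f : E →ₗ[Ω →ₘ[P] ℂ] Ω →ₘ[P] ℂ} (hf : f ∈ rdual nrm) :
    IsLUB {a | ∃ y : E, nrm y ≤ 1 ∧ a = L0abs (f y)} (dnorm nrm f) := by
  obtain ⟨ξ, hξ, hfξ⟩ := hf
  have hzero : L0abs (f 0) ∈ {a | ∃ y : E, nrm y ≤ 1 ∧ a = L0abs (f y)} := by
    refine ⟨0, le_of_ae ?_, rfl⟩
    filter_upwards [le_ae ((hnrm.eq_zero_iff 0).2 rfl).le, zero_ae (P := P) ℝ,
      one_ae (P := P) ℝ] with ω hω hz ho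
    rw [hz] at hω
    rw [ho]
    linarith
  have hξ_ub : ξ ∈ upperBounds {a | ∃ y : E, nrm y ≤ 1 ∧ a = L0abs (f y)} := by
    rintro _ ⟨y, hy, rfl⟩
    refine (hfξ y).trans (le_of_ae ?_)
    filter_upwards [mul_ae ξ (nrm y), le_ae hξ, le_ae hy, zero_ae (P := P) ℝ,
      one_ae (P := P) ℝ] with ω hmul hξω hyω hz ho
    rw [hz] at hξω
    rw [ho] at hyω
    rw [hmul]
    exact mul_le_of_le_one_right hξω hyω
  have hex := AEEqFun.exists_isLUB ⟨_, hzero⟩ ⟨ξ, hξ_ub⟩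
  unfold dnorm
  rw [dif_pos hex]
  exact hex.choose_spec

lemma dnorm_le_iff [IsFiniteMeasure P] {nrm : E → Ω →ₘ[P] ℝ} (hnrm : IsRNNorm nrm)
    {f : E →ₗ[Ω →ₘ[P] ℂ] Ω →ₘ[P] ℂ} (hf : f ∈ rdual nrm) (c : Ω →ₘ[P] ℝ) :
    dnorm nrm f ≤ c ↔ ∀ y, nrm y ≤ 1 → L0abs (f y) ≤ c := by
  rw [isLUB_le_iff (isLUB_dnorm hnrm hf)]
  constructor
  · exact fun h y hy => h ⟨y, hy, rfl⟩
  · rintro h _ ⟨y, hy, rfl⟩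
    exact h y hy

end RandomDual

variable [IsProbabilityMeasure P] {M : Type*} [AddCommGroup M] [Module (Ω →ₘ[P] ℂ) M]

lemma isClosed_setOf_L0abs_apply_le (x : M) (c : Ω →ₘ[P] ℝ) :
    IsClosed[sigmaElTop P M] {g | L0abs (g x) ≤ c} := by
  rw [← @isOpen_compl_iff _ _ (sigmaElTop P M)]
  intro g hg
  obtain ⟨r, hr, hA⟩ := exists_pos_measure_setOf_add_le_of_not_ae_le fun h => hg (le_of_ae h)
  set A := {ω | c ω + r ≤ L0abs (g x) ω}
  set l := min (P A).toReal (1 / 2)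
  have hl : 0 < l := lt_min (ENNReal.toReal_pos hA (measure_ne_top P A)) one_half_pos
  have hl_half : l ≤ 1 / 2 := min_le_right _ _
  have hlA : ENNReal.ofReal l ≤ P A := ENNReal.ofReal_le_of_le_toReal (min_le_left _ _)
  refine ⟨⟨{x}, ⟨r / 2, half_pos hr⟩, ⟨l, hl, hl_half.trans_lt one_half_lt_one⟩⟩,
    fun h hh hhc => ?_⟩
  simp only [Finset.mem_singleton, forall_eq] at hh
  set B := {ω | L0abs (h x - g x) ω < r / 2}
  -- on `A ∩ B`, `|h x| ≥ |g x| - |h x - g x| > c + r / 2`, contradicting `hhc`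
  have hAB : P (A ∩ B) = 0 := by
    rw [measure_eq_zero_iff_ae_notMem]
    filter_upwards [L0abs_ae (g x), L0abs_ae (h x), L0abs_ae (h x - g x),
      sub_ae (h x) (g x), le_ae hhc] with ω hg hh hhg hsub hc
    rintro ⟨hωA, hωB⟩
    simp only [A, B, Set.mem_ofPred_eq, hg, hhg, hsub] at hωA hωB
    have := norm_sub_norm_le (g x ω) (h x ω)
    rw [norm_sub_rev] at this
    rw [hh] at hc
    linarith
  have hB : NullMeasurableSet B P := (measurableSet_lt
    (L0abs (h x - g x)).stronglyMeasurable.measurable measurable_const).nullMeasurableSet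
  have hAB_le : P A + P B ≤ 1 := by
    rw [← measure_union_add_inter₀ A hB, hAB, add_zero]
    exact prob_le_one
  refine lt_irrefl (1 : ENNReal) ?_
  calc (1 : ENNReal) = ENNReal.ofReal l + ENNReal.ofReal (1 - l) := by
        rw [← ENNReal.ofReal_add hl.le (by linarith), add_sub_cancel, ENNReal.ofReal_one]
    _ < P A + P B := ENNReal.add_lt_add_of_le_of_lt ENNReal.ofReal_ne_top hlA hh
    _ ≤ 1 := hAB_le

lemma sigmaCTop_le_sigmaElTop : sigmaCTop P M ≤ sigmaElTop P M := by
  refine ballTop_le_ballTop _ _ fun g ⟨s, ⟨e, he⟩, ⟨l, hl⟩⟩ =>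
    ⟨⟨s, AEEqFun.const Ω e, (AEEqFun.coeFn_const Ω e).mono fun _ h => h ▸ he⟩,
      fun h hh x hx => ?_⟩
  have hfull : ∀ᵐ ω ∂P, ω ∈ {ω | L0abs (h x - g x) ω < e} := by
    filter_upwards [hh x hx, AEEqFun.coeFn_const Ω e] with ω hω he
    rwa [he] at hω
  calc ENNReal.ofReal (1 - l) < 1 := ENNReal.ofReal_lt_one.2 (by linarith)
    _ = P Set.univ := measure_univ.symm
    _ ≤ _ := measure_mono_ae (hfull.mono fun _ h _ => h)

end RNM

open MeasureTheory RNM in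
theorem unit_ball_weak_star_closed_general {Ω : Type} [MeasurableSpace Ω] {P : Measure Ω}
    [IsProbabilityMeasure P] {E : Type*} [AddCommGroup E] [Module (Ω →ₘ[P] ℂ) E]
    (nrm : E → Ω →ₘ[P] ℝ) (hnrm : IsRNNorm nrm) :
    @IsClosed ↥(rdual nrm)
      (TopologicalSpace.induced (Subtype.val) (sigmaElTop P E))
      {f : ↥(rdual nrm) | dnorm nrm f.1 ≤ 1} ∧
    @IsClosed ↥(rdual nrm)
      (TopologicalSpace.induced (Subtype.val) (sigmaCTop P E))
      {f : ↥(rdual nrm) | dnorm nrm f.1 ≤ 1} := by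
  have hball : {f : ↥(rdual nrm) | dnorm nrm f.1 ≤ 1} =
      Subtype.val ⁻¹' ⋂ (y : E) (_ : nrm y ≤ 1), {g | L0abs (g y) ≤ 1} := by
    ext f
    simpa using dnorm_le_iff hnrm f.2 1
  have hEl : IsClosed[sigmaElTop P E] (⋂ (y : E) (_ : nrm y ≤ 1), {g | L0abs (g y) ≤ 1}) :=
    @isClosed_biInter _ _ (sigmaElTop P E) _ _ fun y _ => isClosed_setOf_L0abs_apply_le y 1
  have hEl_ball : IsClosed[TopologicalSpace.induced Subtype.val (sigmaElTop P E)]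
      {f : ↥(rdual nrm) | dnorm nrm f.1 ≤ 1} :=
    (isClosed_induced_iff (t := sigmaElTop P E)).2 ⟨_, hEl, hball.symm⟩
  exact ⟨hEl_ball, hEl_ball.mono (induced_mono sigmaCTop_le_sigmaElTop)⟩

open MeasureTheory RNM in
/-- Lemma 4.1: if `E` has the countable concatenation property, the closed unit ball of
the random conjugate space `E*` is closed for both the `(ε,λ)` weak star topology
`σ_{(ε,λ)}(E*,E)` and the locally `L⁰`-convex weak star topology `σ_c(E*,E)`. -/
theorem unit_ball_weak_star_closed {Ω : Type} [MeasurableSpace Ω] {P : Measure Ω}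
    [IsProbabilityMeasure P] {E : Type*} [AddCommGroup E] [Module (Ω →ₘ[P] ℂ) E]
    (nrm : E → Ω →ₘ[P] ℝ) (hnrm : IsRNNorm nrm) (hccp : HasCCP P E) :
    @IsClosed ↥(rdual nrm)
      (TopologicalSpace.induced (Subtype.val) (sigmaElTop P E))
      {f : ↥(rdual nrm) | dnorm nrm f.1 ≤ 1} ∧
    @IsClosed ↥(rdual nrm)
      (TopologicalSpace.induced (Subtype.val) (sigmaCTop P E))
      {f : ↥(rdual nrm) | dnorm nrm f.1 ≤ 1} :=
  unit_ball_weak_star_closed_general nrm hnrm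
end

section
/- (Goldstine–Weston in RN modules, (ε,λ) version) Let (E,‖·‖) be a random normed module over ℂ with base (Ω,𝓕,P) (no countable concatenation hypothesis). Then the image J(E) of E under the random natural embedding is dense in E** with respect to the (ε,λ) weak-star topology σ_{(ε,λ)}(E**,E*). -/
open MeasureTheory

/-!
Fix `f₁, …, fₙ ∈ E*` and `𝔩 ∈ E**`. The random vectors `v x = (fᵢ x)ᵢ` (`x ∈ E`) with values in
`ℂⁿ` form an `L⁰`-submodule, and the goal is to approximate `c = (𝔩 fᵢ)ᵢ` by them a.e. Pasting two
candidates along the set where one of them is closer to `c` makes the distances `‖v x - c‖` a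
downward directed family, so minimising the bounded functional `x ↦ ∫ arctan ‖v x - c‖` yields a
sequence `v xₖ` whose distances decrease a.e. to the essential infimum. The parallelogram law
makes `v xₖ` a.e. Cauchy, and its limit `u` is a.e. a nearest point, so `c - u` is a.e. orthogonal
to every `v x`. Writing `c - u = (ηᵢ)ᵢ`, the functional `∑ conj ηᵢ • fᵢ` vanishes on `E`, hence so
does its image under `𝔩`, which says `c - u ⟂ c`; therefore `u = c`. Since a.e. convergence implies
convergence in probability, `J xₖ` enters every `σ_{(ε,λ)}` neighbourhood of `𝔩`. Only finite
pastings and a.e. limits are used, so no countable concatenation property is needed.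
-/

open MeasureTheory Filter Topology

section Arctan

open Real

variable {Ω X : Type*} [MeasurableSpace Ω] {P : Measure Ω}

lemma norm_arctan_le (x : ℝ) : ‖arctan x‖ ≤ π / 2 :=
  abs_le.2 ⟨(neg_pi_div_two_lt_arctan x).le, (arctan_lt_pi_div_two x).le⟩

lemma bddBelow_range_integral_arctan {D : X → Ω → ℝ} (hD0 : ∀ x ω, 0 ≤ D x ω) :
    BddBelow (Set.range fun x => ∫ ω, arctan (D x ω) ∂P) :=
  ⟨0, by
    rintro _ ⟨x, rfl⟩
    exact integral_nonneg fun ω => arctan_nonneg.2 (hD0 x ω)⟩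

variable [IsFiniteMeasure P]

lemma integrable_arctan_comp_s15 {f : Ω → ℝ} (hf : AEStronglyMeasurable f P) :
    Integrable (fun ω => arctan (f ω)) P :=
  .of_bound (continuous_arctan.comp_aestronglyMeasurable hf) _
    (ae_of_all _ fun ω => norm_arctan_le (f ω))

lemma tendsto_integral_arctan_comp {f : ℕ → Ω → ℝ} {g : Ω → ℝ}
    (hf : ∀ k, AEStronglyMeasurable (f k) P)
    (hlim : ∀ᵐ ω ∂P, Tendsto (fun k => f k ω) atTop (𝓝 (g ω))) :
    Tendsto (fun k => ∫ ω, arctan (f k ω) ∂P) atTop (𝓝 (∫ ω, arctan (g ω) ∂P)) :=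
  tendsto_integral_of_dominated_convergence (fun _ => π / 2)
    (fun k => continuous_arctan.comp_aestronglyMeasurable (hf k)) (integrable_const _)
    (fun _ => ae_of_all _ fun _ => norm_arctan_le _)
    (hlim.mono fun _ h => (continuous_arctan.tendsto _).comp h)

lemma ae_eq_of_ae_le_of_integral_arctan_le {f g : Ω → ℝ} (hf : AEStronglyMeasurable f P)
    (hg : AEStronglyMeasurable g P) (hfg : f ≤ᵐ[P] g)
    (hint : ∫ ω, arctan (g ω) ∂P ≤ ∫ ω, arctan (f ω) ∂P) : f =ᵐ[P] g := by
  have hnonneg : 0 ≤ᵐ[P] fun ω => arctan (g ω) - arctan (f ω) :=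
    hfg.mono fun ω h => sub_nonneg.2 (arctan_strictMono.monotone h)
  have hintegrable := (integrable_arctan_comp_s15 hg).sub (integrable_arctan_comp_s15 hf)
  have hzero : ∫ ω, (arctan (g ω) - arctan (f ω)) ∂P = 0 := by
    refine le_antisymm ?_ (integral_nonneg_of_ae hnonneg)
    rw [integral_sub (integrable_arctan_comp_s15 hg) (integrable_arctan_comp_s15 hf)]
    linarith
  filter_upwards [(integral_eq_zero_iff_of_nonneg_ae hnonneg hintegrable).1 hzero] with ω h
  exact arctan_injective (sub_eq_zero.1 h).symm

end Arctan

section EssInf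

open Real

variable {Ω : Type*} [MeasurableSpace Ω] {P : Measure Ω} [IsFiniteMeasure P] {X : Type*}

lemma exists_antitone_seq_tendsto_iInf_integral_arctan [Nonempty X] (D : X → Ω → ℝ)
    (hD : ∀ x, Measurable (D x)) (hD0 : ∀ x ω, 0 ≤ D x ω)
    (hdir : ∀ x y, ∃ z, D z =ᵐ[P] fun ω => min (D x ω) (D y ω)) :
    ∃ ys : ℕ → X, (∀ᵐ ω ∂P, Antitone fun k => D (ys k) ω) ∧
      Tendsto (fun k => ∫ ω, arctan (D (ys k) ω) ∂P) atTop
        (𝓝 (⨅ x, ∫ ω, arctan (D x ω) ∂P)) := by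
  set I : X → ℝ := fun x => ∫ ω, arctan (D x ω) ∂P
  have hbdd : BddBelow (Set.range I) := bddBelow_range_integral_arctan hD0
  choose xs hxs using fun k : ℕ =>
    exists_lt_of_ciInf_lt (lt_add_of_pos_right (⨅ x, I x) (Nat.one_div_pos_of_nat (n := k)))
  choose paste hpaste using hdir
  let ys : ℕ → X := fun k => Nat.rec (xs 0) (fun k z => paste z (xs (k + 1))) k
  have hstep : ∀ᵐ ω ∂P, ∀ k, D (ys (k + 1)) ω = min (D (ys k) ω) (D (xs (k + 1)) ω) :=
    ae_all_iff.2 fun k => hpaste _ _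
  have hle : ∀ k, I (ys k) ≤ I (xs k) := by
    rintro (_ | k)
    · exact le_rfl
    · refine integral_mono_ae (integrable_arctan_comp_s15 (hD _).aestronglyMeasurable)
        (integrable_arctan_comp_s15 (hD _).aestronglyMeasurable) ?_
      filter_upwards [hstep] with ω hω
      exact arctan_strictMono.monotone ((hω k).trans_le (min_le_right _ _))
  refine ⟨ys, ?_, ?_⟩
  · filter_upwards [hstep] with ω hω
    exact antitone_nat_of_succ_le fun k => (hω k).trans_le (min_le_left _ _)
  · refine tendsto_of_tendsto_of_tendsto_of_le_of_le tendsto_const_nhds ?_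
      (fun k => ciInf_le hbdd (ys k)) fun k => (hle k).trans (hxs k).le
    simpa using tendsto_const_nhds.add (tendsto_one_div_add_atTop_nhds_zero_nat (𝕜 := ℝ))

theorem exists_seq_tendsto_ae_le_of_directed [Nonempty X] (D : X → Ω → ℝ)
    (hD : ∀ x, Measurable (D x)) (hD0 : ∀ x ω, 0 ≤ D x ω)
    (hdir : ∀ x y, ∃ z, D z =ᵐ[P] fun ω => min (D x ω) (D y ω)) :
    ∃ (ys : ℕ → X) (g : Ω → ℝ), (∀ᵐ ω ∂P, Tendsto (fun k => D (ys k) ω) atTop (𝓝 (g ω))) ∧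
      ∀ x, g ≤ᵐ[P] D x := by
  obtain ⟨ys, hanti, hI⟩ := exists_antitone_seq_tendsto_iInf_integral_arctan D hD hD0 hdir
  set r := ⨅ x, ∫ ω, arctan (D x ω) ∂P
  have hbdd := bddBelow_range_integral_arctan (P := P) hD0
  set g : Ω → ℝ := fun ω => ⨅ k, D (ys k) ω
  have hlim : ∀ᵐ ω ∂P, Tendsto (fun k => D (ys k) ω) atTop (𝓝 (g ω)) := by
    filter_upwards [hanti] with ω h
    exact tendsto_atTop_ciInf h ⟨0, by rintro _ ⟨k, rfl⟩; exact hD0 _ ω⟩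
  have hmeas : ∀ k, AEStronglyMeasurable (D (ys k)) P := fun k => (hD _).aestronglyMeasurable
  have hg : AEStronglyMeasurable g P := aestronglyMeasurable_of_tendsto_ae atTop hmeas hlim
  have hIg : ∫ ω, arctan (g ω) ∂P = r :=
    tendsto_nhds_unique (tendsto_integral_arctan_comp hmeas hlim) hI
  refine ⟨ys, g, hlim, fun x => ?_⟩
  choose z hz using fun k => hdir (ys k) x
  have hmin_le : ∫ ω, arctan (g ω) ∂P ≤ ∫ ω, arctan (min (g ω) (D x ω)) ∂P := by
    refine hIg ▸ ge_of_tendsto' (tendsto_integral_arctan_comp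
      (f := fun k ω => min (D (ys k) ω) (D x ω))
      (fun k => (hmeas k).inf (hD x).aestronglyMeasurable)
      (hlim.mono fun ω h => h.min tendsto_const_nhds)) fun k =>
      (ciInf_le hbdd (z k)).trans_eq (integral_congr_ae ((hz k).fun_comp arctan))
  have heq := ae_eq_of_ae_le_of_integral_arctan_le (hg.inf (hD x).aestronglyMeasurable) hg
    (ae_of_all _ fun ω => min_le_left _ _) hmin_le
  filter_upwards [heq] with ω h
  exact min_eq_left_iff.1 h

end EssInf

section InnerProduct

variable {𝕜 V : Type*} [RCLike 𝕜] [NormedAddCommGroup V] [InnerProductSpace 𝕜 V]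

local notation "⟪" x ", " y "⟫" => inner 𝕜 x y

lemma norm_sub_sq_eq_of_midpoint (a b c : V) :
    ‖a - b‖ ^ 2 = 2 * ‖a - c‖ ^ 2 + 2 * ‖b - c‖ ^ 2 - 4 * ‖(2⁻¹ : 𝕜) • (a + b) - c‖ ^ 2 := by
  have hmid : (2⁻¹ : 𝕜) • (a + b) - c = (2⁻¹ : 𝕜) • ((a - c) + (b - c)) := by module
  have := parallelogram_law_with_norm 𝕜 (a - c) (b - c)
  rw [hmid, norm_smul, mul_pow, norm_inv, RCLike.norm_two, sub_sub_sub_cancel_right] at *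
  linarith

lemma cauchySeq_of_tendsto_norm_sub {a : ℕ → V} {c : V} {g : ℝ}
    (hlim : Tendsto (fun k => ‖a k - c‖) atTop (𝓝 g))
    (hmid : ∀ j k, g ≤ ‖(2⁻¹ : 𝕜) • (a j + a k) - c‖) : CauchySeq a := by
  have hg : 0 ≤ g := ge_of_tendsto' hlim fun _ => norm_nonneg _
  refine Metric.cauchySeq_iff'.2 fun ε hε => ?_
  obtain ⟨N, hN⟩ := eventually_atTop.1 ((hlim.pow 2).eventually_lt_const
    (lt_add_of_pos_right (g ^ 2) (by positivity : 0 < ε ^ 2 / 4)))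
  refine ⟨N, fun n hn => ?_⟩
  have h := norm_sub_sq_eq_of_midpoint (𝕜 := 𝕜) (a n) (a N) c
  have := pow_le_pow_left₀ hg (hmid n N) 2
  have := hN n hn
  have := hN N le_rfl
  rw [dist_eq_norm]
  exact lt_of_pow_lt_pow_left₀ 2 hε.le (by linarith)

lemma inner_eq_zero_of_forall_norm_le_norm_smul_sub (p d : V)
    (h : ∀ n : ℕ, ‖d‖ ≤ ‖((((n + 1 : ℝ)⁻¹ : ℝ) : 𝕜) * ⟪p, d⟫) • p - d‖) : ⟪p, d⟫ = 0 := by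
  -- For `t = ε ⟪p, d⟫` one has `‖t • p - d‖² = ‖d‖² - ε ‖⟪p, d⟫‖² (2 - ε ‖p‖²)`.
  by_contra hq
  have hq' : 0 < ‖⟪p, d⟫‖ ^ 2 := by positivity
  obtain ⟨n, hn⟩ := exists_nat_gt (‖p‖ ^ 2 / 2)
  set ε : ℝ := (n + 1 : ℝ)⁻¹
  have hε : 0 < ε := by positivity
  have hre : RCLike.re ⟪((ε : 𝕜) * ⟪p, d⟫) • p, d⟫ = ε * ‖⟪p, d⟫‖ ^ 2 := by
    rw [inner_smul_left, map_mul (starRingEnd 𝕜), RCLike.conj_ofReal, mul_assoc, RCLike.conj_mul,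
      ← RCLike.ofReal_pow, ← RCLike.ofReal_mul, RCLike.ofReal_re]
  have hnorm : ‖(ε : 𝕜) * ⟪p, d⟫‖ = ε * ‖⟪p, d⟫‖ := by
    rw [norm_mul, RCLike.norm_ofReal, abs_of_pos hε]
  have := pow_le_pow_left₀ (norm_nonneg _) (h n) 2
  rw [norm_sub_sq (𝕜 := 𝕜), hre, norm_smul, hnorm] at this
  have hpos : 0 < ε * ‖⟪p, d⟫‖ ^ 2 := by positivity
  have hge : 2 ≤ ε * ‖p‖ ^ 2 := by
    have : 0 ≤ ε * ‖⟪p, d⟫‖ ^ 2 * (ε * ‖p‖ ^ 2 - 2) := by linarith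
    linarith [(mul_nonneg_iff_of_pos_left hpos).1 this]
  have hlt : ε * ‖p‖ ^ 2 < 2 := by
    rw [inv_mul_lt_iff₀ (by positivity)]
    linarith
  exact hge.not_gt hlt

end InnerProduct

section RandomVectors

variable {𝕜 V X Ω : Type*} [RCLike 𝕜] [NormedAddCommGroup V] [InnerProductSpace 𝕜 V]
  [MeasurableSpace Ω] {P : Measure Ω}

local notation "⟪" x ", " y "⟫" => inner 𝕜 x y

variable (𝕜 P) in
def ClosedUnderL0Comb (v : X → Ω → V) : Prop :=
  ∀ a b : Ω → 𝕜, AEStronglyMeasurable a P → AEStronglyMeasurable b P →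
    ∀ x y, ∃ z, ∀ᵐ ω ∂P, v z ω = a ω • v x ω + b ω • v y ω

namespace ClosedUnderL0Comb

variable {v : X → Ω → V} {c : Ω → V}

lemma exists_norm_sub_ae_eq_min (hv : ClosedUnderL0Comb 𝕜 P v)
    (hmeas : ∀ x, StronglyMeasurable (v x)) (hc : StronglyMeasurable c) (x y : X) :
    ∃ z, (fun ω => ‖v z ω - c ω‖) =ᵐ[P] fun ω => min ‖v x ω - c ω‖ ‖v y ω - c ω‖ := by
  set A := {ω | ‖v x ω - c ω‖ ≤ ‖v y ω - c ω‖}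
  have hA : MeasurableSet A :=
    measurableSet_le ((hmeas x).sub hc).norm.measurable ((hmeas y).sub hc).norm.measurable
  obtain ⟨z, hz⟩ := hv (A.indicator 1) (Aᶜ.indicator 1)
    (stronglyMeasurable_const.indicator hA).aestronglyMeasurable
    (stronglyMeasurable_const.indicator hA.compl).aestronglyMeasurable x y
  refine ⟨z, hz.mono fun ω h => ?_⟩
  by_cases hω : ‖v x ω - c ω‖ ≤ ‖v y ω - c ω‖
  · simp [h, A, hω]
  · simp [h, A, hω, le_of_not_ge hω]

theorem exists_seq_tendsto_ae_nearest [CompleteSpace V] [IsFiniteMeasure P] [Nonempty X]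
    (hv : ClosedUnderL0Comb 𝕜 P v) (hmeas : ∀ x, StronglyMeasurable (v x))
    (hc : StronglyMeasurable c) :
    ∃ (ys : ℕ → X) (u : Ω → V), AEStronglyMeasurable u P ∧
      (∀ᵐ ω ∂P, Tendsto (fun k => v (ys k) ω) atTop (𝓝 (u ω))) ∧
      ∀ x, ∀ᵐ ω ∂P, ‖u ω - c ω‖ ≤ ‖v x ω - c ω‖ := by
  obtain ⟨ys, g, hlim, hg⟩ := exists_seq_tendsto_ae_le_of_directed
    (fun x ω => ‖v x ω - c ω‖) (fun x => ((hmeas x).sub hc).norm.measurable)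
    (fun _ _ => norm_nonneg _) (hv.exists_norm_sub_ae_eq_min hmeas hc)
  choose mid hmid using fun j k => hv (fun _ => 2⁻¹) (fun _ => 2⁻¹)
    aestronglyMeasurable_const aestronglyMeasurable_const (ys j) (ys k)
  have hcauchy : ∀ᵐ ω ∂P, CauchySeq fun k => v (ys k) ω := by
    filter_upwards [hlim, ae_all_iff.2 fun j => ae_all_iff.2 fun k => hmid j k,
      ae_all_iff.2 fun j => ae_all_iff.2 fun k => hg (mid j k)] with ω hlimω hmidω hgω
    refine cauchySeq_of_tendsto_norm_sub (𝕜 := 𝕜) hlimω fun j k => ?_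
    rw [smul_add, ← hmidω]
    exact hgω j k
  have hu : ∀ᵐ ω ∂P, Tendsto (fun k => v (ys k) ω) atTop
      (𝓝 (limUnder atTop fun k => v (ys k) ω)) :=
    hcauchy.mono fun ω h => h.tendsto_limUnder
  refine ⟨ys, _, aestronglyMeasurable_of_tendsto_ae atTop
    (fun k => (hmeas (ys k)).aestronglyMeasurable) hu, hu, fun x => ?_⟩
  filter_upwards [hu, hlim, hg x] with ω huω hlimω hgω
  rw [tendsto_nhds_unique ((huω.sub_const (c ω)).norm) hlimω]
  exact hgω

theorem inner_sub_eq_zero_of_nearest (hv : ClosedUnderL0Comb 𝕜 P v)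
    (hmeas : ∀ x, StronglyMeasurable (v x)) (hc : StronglyMeasurable c) {ys : ℕ → X}
    {u : Ω → V} (hu : AEStronglyMeasurable u P)
    (hlim : ∀ᵐ ω ∂P, Tendsto (fun k => v (ys k) ω) atTop (𝓝 (u ω)))
    (hnear : ∀ x, ∀ᵐ ω ∂P, ‖u ω - c ω‖ ≤ ‖v x ω - c ω‖) (x : X) :
    ∀ᵐ ω ∂P, ⟪v x ω - u ω, c ω - u ω⟫ = 0 := by
  -- Compare `u` with the points `u + t • (v x - u)`, which are a.e. limits of `L⁰`-combinations.
  set t : ℕ → Ω → 𝕜 := fun n ω => (((n + 1 : ℝ)⁻¹ : ℝ) : 𝕜) * ⟪v x ω - u ω, c ω - u ω⟫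
  have ht : ∀ n, AEStronglyMeasurable (t n) P := fun n =>
    (((hmeas x).aestronglyMeasurable.sub hu).inner (hc.aestronglyMeasurable.sub hu)).const_mul _
  choose z hz using fun n k => hv (1 - t n) (t n) (aestronglyMeasurable_const.sub (ht n)) (ht n)
    (ys k) x
  filter_upwards [hlim, ae_all_iff.2 fun n => ae_all_iff.2 fun k => hz n k,
    ae_all_iff.2 fun n => ae_all_iff.2 fun k => hnear (z n k)] with ω hlimω hzω hnearω
  refine inner_eq_zero_of_forall_norm_le_norm_smul_sub _ _ fun n => ?_
  have hlim_comb : Tendsto (fun k => ‖v (z n k) ω - c ω‖) atTop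
      (𝓝 ‖(1 - t n ω) • u ω + t n ω • v x ω - c ω‖) := by
    simp only [hzω n]
    exact (((hlimω.const_smul _).add_const _).sub_const _).norm
  have hcomb_eq : (1 - t n ω) • u ω + t n ω • v x ω - c ω
      = t n ω • (v x ω - u ω) - (c ω - u ω) := by module
  rw [norm_sub_rev, ← hcomb_eq]
  exact ge_of_tendsto' hlim_comb (hnearω n)

theorem exists_seq_tendsto_ae [CompleteSpace V] [IsFiniteMeasure P] [Nonempty X]
    (hv : ClosedUnderL0Comb 𝕜 P v) (hmeas : ∀ x, StronglyMeasurable (v x))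
    (hc : StronglyMeasurable c)
    (horth : ∀ w : Ω → V, AEStronglyMeasurable w P → (∀ x, ∀ᵐ ω ∂P, ⟪w ω, v x ω⟫ = 0) →
      ∀ᵐ ω ∂P, ⟪w ω, c ω⟫ = 0) :
    ∃ ys : ℕ → X, ∀ᵐ ω ∂P, Tendsto (fun k => v (ys k) ω) atTop (𝓝 (c ω)) := by
  obtain ⟨ys, u, hu, hlim, hnear⟩ := hv.exists_seq_tendsto_ae_nearest hmeas hc
  have horth_u := hv.inner_sub_eq_zero_of_nearest hmeas hc hu hlim hnear
  obtain ⟨z₀, hz₀⟩ := hv 0 0 aestronglyMeasurable_const aestronglyMeasurable_const (ys 0) (ys 0)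
  have hu_orth : ∀ᵐ ω ∂P, ⟪c ω - u ω, u ω⟫ = 0 := by
    filter_upwards [horth_u z₀, hz₀] with ω h h₀
    simpa [h₀, inner_neg_left, inner_eq_zero_symm] using h
  have hperp : ∀ x, ∀ᵐ ω ∂P, ⟪c ω - u ω, v x ω⟫ = 0 := fun x => by
    filter_upwards [horth_u x, hu_orth] with ω h h'
    rw [inner_sub_left, inner_eq_zero_symm.1 h', sub_zero] at h
    exact inner_eq_zero_symm.1 h
  refine ⟨ys, ?_⟩
  filter_upwards [hlim, hu_orth, horth (fun ω => c ω - u ω) (hc.aestronglyMeasurable.sub hu) hperp]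
    with ω hlimω h h'
  have : c ω - u ω = 0 := by
    rw [← inner_self_eq_zero (𝕜 := 𝕜), inner_sub_right, h, h', sub_zero]
  rwa [sub_eq_zero.1 this]

end ClosedUnderL0Comb

end RandomVectors

lemma sum_mul_map_eq_zero {R M ι : Type*} [CommRing R] [AddCommGroup M] [Module R M]
    [Fintype ι] {N : Submodule R (M →ₗ[R] R)} (l : N →ₗ[R] R) (f : ι → N) (η : ι → R)
    (h : ∀ x, ∑ i, η i * (f i : M →ₗ[R] R) x = 0) : ∑ i, η i * l (f i) = 0 := by
  have hzero : ∑ i, η i • f i = 0 := by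
    ext x
    simpa using h x
  simpa using congrArg l hzero

namespace RNM

lemma mem_closure_ballTop {X ι : Type*} [Nonempty ι] {ball : X → ι → Set X}
    {dir : ∀ x i j, ∃ k, ball x k ⊆ ball x i ∩ ball x j} {S : Set X} {x : X}
    (h : ∀ i, (ball x i ∩ S).Nonempty) : x ∈ @closure X (ballTop ball dir) S := by
  let := ballTop ball dir
  refine mem_closure_iff.2 fun o ho hx => ?_
  obtain ⟨i, hi⟩ := ho x hx
  obtain ⟨y, hy, hyS⟩ := h i
  exact ⟨y, hi hy, hyS⟩

variable {Ω : Type} [MeasurableSpace Ω] {P : Measure Ω}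

lemma sum_ae {ι γ : Type*} [TopologicalSpace γ] [AddCommMonoid γ] [ContinuousAdd γ]
    (s : Finset ι) (ξ : ι → Ω →ₘ[P] γ) : ∀ᵐ ω ∂P, (∑ i ∈ s, ξ i) ω = ∑ i ∈ s, ξ i ω := by
  classical
  induction s using Finset.induction_on with
  | empty => simpa using zero_ae γ
  | insert i s hi ih =>
    filter_upwards [AEEqFun.coeFn_add (ξ i) (∑ j ∈ s, ξ j), ih] with ω h1 h2
    rw [Finset.sum_insert hi, Finset.sum_insert hi, h1, Pi.add_apply, h2]

variable {ι : Type*} [Fintype ι]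

lemma conjC_ae (ξ : Ω →ₘ[P] ℂ) : ∀ᵐ ω ∂P, conjC ξ ω = starRingEnd ℂ (ξ ω) :=
  AEEqFun.coeFn_comp _ _ ξ

noncomputable def randomVec (ξ : ι → Ω →ₘ[P] ℂ) (ω : Ω) : EuclideanSpace ℂ ι :=
  WithLp.toLp 2 fun i => ξ i ω

lemma stronglyMeasurable_randomVec (ξ : ι → Ω →ₘ[P] ℂ) : StronglyMeasurable (randomVec ξ) :=
  (PiLp.continuous_toLp 2 _).comp_stronglyMeasurable
    (measurable_pi_iff.2 fun i => (ξ i).stronglyMeasurable.measurable).stronglyMeasurable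

lemma exists_ae_eq_randomVec {w : Ω → EuclideanSpace ℂ ι} (hw : AEStronglyMeasurable w P) :
    ∃ η : ι → Ω →ₘ[P] ℂ, w =ᵐ[P] randomVec η := by
  have hcoord : ∀ i, AEStronglyMeasurable (fun ω => w ω i) P := fun i =>
    (EuclideanSpace.proj i).continuous.comp_aestronglyMeasurable hw
  refine ⟨fun i => AEEqFun.mk _ (hcoord i), ?_⟩
  filter_upwards [ae_all_iff.2 fun i => AEEqFun.coeFn_mk _ (hcoord i)] with ω h
  ext i
  exact (h i).symm

lemma inner_randomVec_ae (η ξ : ι → Ω →ₘ[P] ℂ) :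
    ∀ᵐ ω ∂P, inner ℂ (randomVec η ω) (randomVec ξ ω) = (∑ i, conjC (η i) * ξ i) ω := by
  filter_upwards [sum_ae Finset.univ (fun i => conjC (η i) * ξ i),
    ae_all_iff.2 fun i => mul_ae (conjC (η i)) (ξ i),
    ae_all_iff.2 fun i => conjC_ae (η i)] with ω hsum hmul hconj
  rw [hsum, PiLp.inner_apply]
  refine Finset.sum_congr rfl fun i _ => ?_
  rw [hmul, hconj]
  simp [randomVec, mul_comm]

variable {E : Type*} [AddCommGroup E] [Module (Ω →ₘ[P] ℂ) E]

lemma closedUnderL0Comb_randomVec (F : ι → E →ₗ[Ω →ₘ[P] ℂ] (Ω →ₘ[P] ℂ)) :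
    ClosedUnderL0Comb ℂ P fun x => randomVec fun i => F i x := by
  intro a b ha hb x y
  refine ⟨AEEqFun.mk a ha • x + AEEqFun.mk b hb • y, ?_⟩
  have hF : ∀ i, F i (AEEqFun.mk a ha • x + AEEqFun.mk b hb • y)
      = AEEqFun.mk a ha * F i x + AEEqFun.mk b hb * F i y := fun i => by
    rw [map_add, map_smul, map_smul, smul_eq_mul, smul_eq_mul]
  filter_upwards [ae_all_iff.2 fun i => add_ae (AEEqFun.mk a ha * F i x) (AEEqFun.mk b hb * F i y),
    ae_all_iff.2 fun i => mul_ae (AEEqFun.mk a ha) (F i x),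
    ae_all_iff.2 fun i => mul_ae (AEEqFun.mk b hb) (F i y),
    AEEqFun.coeFn_mk a ha, AEEqFun.coeFn_mk b hb] with ω hadd hmula hmulb hma hmb
  ext i
  simp [randomVec, hF, hadd, hmula, hmulb, hma, hmb]

theorem exists_seq_tendsto_ae_of_sum_mul_eq_zero [IsFiniteMeasure P]
    (F : ι → E →ₗ[Ω →ₘ[P] ℂ] (Ω →ₘ[P] ℂ)) (c : ι → Ω →ₘ[P] ℂ)
    (hc : ∀ η : ι → Ω →ₘ[P] ℂ, (∀ x, ∑ i, η i * F i x = 0) → ∑ i, η i * c i = 0) :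
    ∃ ys : ℕ → E, ∀ᵐ ω ∂P, ∀ i, Tendsto (fun k => F i (ys k) ω) atTop (𝓝 (c i ω)) := by
  obtain ⟨ys, hys⟩ := (closedUnderL0Comb_randomVec F).exists_seq_tendsto_ae
    (fun x => stronglyMeasurable_randomVec _) (stronglyMeasurable_randomVec c) fun w hw hperp => by
      obtain ⟨η, hη⟩ := exists_ae_eq_randomVec hw
      have hFη : ∀ x, ∑ i, conjC (η i) * F i x = 0 := fun x => by
        refine AEEqFun.ext ?_
        filter_upwards [hperp x, hη, inner_randomVec_ae η (F · x), zero_ae ℂ] with ω h h' h'' h₀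
        rw [← h'', ← h', h, h₀]
      filter_upwards [hη, inner_randomVec_ae η c, zero_ae ℂ] with ω h h' h₀
      rw [h, h', hc _ hFη, h₀]
  refine ⟨ys, hys.mono fun ω h i => ?_⟩
  exact ((EuclideanSpace.proj i).continuous.tendsto _).comp h

lemma tendsto_measure_L0abs_sub_lt [IsProbabilityMeasure P] {ξ : ℕ → Ω →ₘ[P] ℂ}
    {η : Ω →ₘ[P] ℂ} (h : ∀ᵐ ω ∂P, Tendsto (fun k => ξ k ω) atTop (𝓝 (η ω))) {e : ℝ}
    (he : 0 < e) : Tendsto (fun k => P {ω | L0abs (ξ k - η) ω < e}) atTop (𝓝 1) := by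
  have hfar := tendstoInMeasure_iff_norm.1
    (tendstoInMeasure_of_tendsto_ae (fun k => (ξ k).aestronglyMeasurable) h) e he
  have hnear : ∀ k, P {ω | L0abs (ξ k - η) ω < e} = 1 - P {ω | e ≤ ‖ξ k ω - η ω‖} := by
    intro k
    have hfar_meas : MeasurableSet {ω | e ≤ ‖ξ k ω - η ω‖} := measurableSet_le measurable_const
      ((ξ k).stronglyMeasurable.measurable.sub η.stronglyMeasurable.measurable).norm
    rw [← prob_compl_eq_one_sub hfar_meas]
    refine measure_congr ?_
    filter_upwards [L0abs_ae (ξ k - η), sub_ae (ξ k) η] with ω h1 h2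
    change (_ < e) = ¬(e ≤ _)
    rw [h1, h2, not_le]
  simpa [hnear] using ENNReal.Tendsto.sub tendsto_const_nhds hfar (.inl ENNReal.one_ne_top)

end RNM

open MeasureTheory RNM in
theorem goldstine_weston_eps_lambda_general {Ω : Type} [MeasurableSpace Ω] {P : Measure Ω}
    [IsProbabilityMeasure P] {E : Type*} [AddCommGroup E] [Module (Ω →ₘ[P] ℂ) E]
    (nrm : E → Ω →ₘ[P] ℝ) :
    ∀ l ∈ rdual (fun f : ↥(rdual nrm) => dnorm nrm f.1),
      l ∈ @closure _ (sigmaElTop P ↥(rdual nrm)) (Set.range (Jmap nrm)) := by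
  intro l _
  refine mem_closure_ballTop fun ⟨s, ⟨e, he⟩, ⟨lam, hlam, _⟩⟩ => ?_
  obtain ⟨ys, hys⟩ := exists_seq_tendsto_ae_of_sum_mul_eq_zero (fun f : s => f.1.1)
    (fun f => l f) fun η hη => sum_mul_map_eq_zero l _ η hη
  have hclose : ∀ᶠ k in atTop, ∀ f : s,
      ENNReal.ofReal (1 - lam) < P {ω | L0abs (Jmap nrm (ys k) f - l f) ω < e} :=
    eventually_all.2 fun f => (tendsto_measure_L0abs_sub_lt (hys.mono fun ω h => h f) he)
      |>.eventually_const_lt (ENNReal.ofReal_lt_one.2 (by linarith))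
  obtain ⟨k, hk⟩ := hclose.exists
  exact ⟨Jmap nrm (ys k), fun f hf => hk ⟨f, hf⟩, Set.mem_range_self _⟩

open MeasureTheory RNM in
/-- Goldstine–Weston theorem in `RN` modules, `(ε,λ)` version (Theorem 4.3): for any `RN`
module `(E, nrm)` over `ℂ` with base `(Ω,𝓕,P)`, the image `J(E)` of the random natural
embedding is dense in `E**` for the `(ε,λ)` weak star topology `σ_{(ε,λ)}(E**,E*)`. -/
theorem goldstine_weston_eps_lambda {Ω : Type} [MeasurableSpace Ω] {P : Measure Ω}
    [IsProbabilityMeasure P] {E : Type*} [AddCommGroup E] [Module (Ω →ₘ[P] ℂ) E]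
    (nrm : E → Ω →ₘ[P] ℝ) (hnrm : IsRNNorm nrm) :
    ∀ l ∈ rdual (fun f : ↥(rdual nrm) => dnorm nrm f.1),
      l ∈ @closure _ (sigmaElTop P ↥(rdual nrm)) (Set.range (Jmap nrm)) :=
  goldstine_weston_eps_lambda_general nrm
end
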